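/- arXiv:2011.02046 — 5 statements merged into one kernel-verified Lean document; each statement's English description precedes it below -/
import Mathlib

section
/- Let A, B : I → ℕ be cost functions, each satisfying the bounded-shared-cost property. If there exist bijections π, φ : I ≃ I with A x ≤ B (π x) for all x : I and B x ≤ A (φ x) for all x : I (i.e., A ≼c B and B ≼c A), then for every m : ℕ the finite sets {x : I | A x ≤ m} and {x : I | B x ≤ m} have the same cardinality. (This is the quantitative content of the paper's lemma that, for cost measures with the bounded-shared-cost property, it is impossible for each of two algorithms to be strictly better than the other under cyclic analysis.) -/
/-! Under `A ≼c B` the bijection `π⁻¹` maps `{B ≤ m}` injectively into `{A ≤ m}`, since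
`A (π⁻¹ y) ≤ B y`; symmetrically `φ⁻¹` maps `{A ≤ m}` into `{B ≤ m}`. Both sets are finite by the
bounded-shared-cost property, so their cardinalities agree. -/

theorem Set.finite_setOf_le_of_finite_fibers {α : Type*} {f : α → ℕ}
    (hf : ∀ n : ℕ, {x : α | f x = n}.Finite) (m : ℕ) : {x : α | f x ≤ m}.Finite :=
  (Set.finite_Iic m).preimage' fun n _ => hf n

theorem Set.ncard_setOf_le_le_of_le_comp_equiv {α β : Type*} [Preorder β] {f g : α → β}
    (σ : α ≃ α) (h : ∀ x, g x ≤ f (σ x)) (b : β) (hg : {x : α | g x ≤ b}.Finite) :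
    {x : α | f x ≤ b}.ncard ≤ {x : α | g x ≤ b}.ncard :=
  Set.ncard_le_ncard_of_injOn σ.symm
    (fun y hy => (h (σ.symm y)).trans (by simpa using hy)) σ.symm.injective.injOn hg

/-- If `A ≼c B` and `B ≼c A` for cost functions with the
bounded-shared-cost property, then for every `m` the finite sets
`{x | A x ≤ m}` and `{x | B x ≤ m}` have the same cardinality. -/
theorem stmt_1 {I : Type*} (A B : I → ℕ)
    (hA : ∀ n : ℕ, {x : I | A x = n}.Finite)
    (hB : ∀ n : ℕ, {x : I | B x = n}.Finite)
    (π : I ≃ I) (hπ : ∀ x : I, A x ≤ B (π x))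
    (φ : I ≃ I) (hφ : ∀ x : I, B x ≤ A (φ x)) (m : ℕ) :
    {x : I | A x ≤ m}.ncard = {x : I | B x ≤ m}.ncard :=
  le_antisymm
    (Set.ncard_setOf_le_le_of_le_comp_equiv φ hφ m (Set.finite_setOf_le_of_finite_fibers hB m))
    (Set.ncard_setOf_le_le_of_le_comp_equiv π hπ m (Set.finite_setOf_le_of_finite_fibers hA m))
end

section
/- Let Y be an infinite type and c : Y → ℕ a function all of whose fibers are finite. Then Y can be enumerated in nondecreasing order of cost: there exists a bijection e : ℕ ≃ Y such that for all i j : ℕ, i ≤ j implies c (e i) ≤ c (e j). -/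
/-!
Enumerate `Y` by an injection `f : Y → ℕ` (it is countable, being a countable union of finite
fibres) and order it lexicographically by `(c y, f y)`. Every initial segment of this linear
order lies in finitely many fibres of `c`, so it is finite; an infinite linear order with finite
initial segments is isomorphic to `ℕ`, and the inverse isomorphism is the required enumeration.
-/

theorem countable_of_finite_fibers {Y : Type*} (c : Y → ℕ)
    (hc : ∀ n : ℕ, {y : Y | c y = n}.Finite) : Countable Y := by
  have (n : ℕ) : Finite {y // c y = n} := (hc n).to_subtype
  exact (Equiv.sigmaFiberEquiv c).symm.injective.countable

section FiniteIic

variable {α : Type*} [LinearOrder α]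

theorem wellFoundedLT_of_finite_Iic (h : ∀ a : α, (Set.Iic a).Finite) : WellFoundedLT α :=
  StrictMono.wellFoundedLT (f := fun a => (h a).toFinset.card) fun a b hab =>
    Finset.card_lt_card <| by simp [Set.Iic_ssubset_Iic, hab]

theorem noMaxOrder_of_finite_Iic [Infinite α] (h : ∀ a : α, (Set.Iic a).Finite) :
    NoMaxOrder α where
  exists_gt a := by
    obtain ⟨b, hb⟩ := (h a).infinite_compl.nonempty
    exact ⟨b, not_le.mp hb⟩

theorem nonempty_orderIso_nat_of_finite_Iic [Infinite α] (h : ∀ a : α, (Set.Iic a).Finite) :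
    Nonempty (α ≃o ℕ) := by
  let _ : LocallyFiniteOrder α :=
    LocallyFiniteOrder.ofFiniteIcc fun a b => (h b).subset Set.Icc_subset_Iic_self
  have := noMaxOrder_of_finite_Iic h
  have := wellFoundedLT_of_finite_Iic h
  let _ : OrderBot α := WellFoundedLT.toOrderBot α
  let _ : SuccOrder α := LinearLocallyFiniteOrder.succOrder α
  let _ : PredOrder α := LinearLocallyFiniteOrder.predOrder α
  exact ⟨orderIsoNatOfLinearSuccPredArch⟩

end FiniteIic

theorem exists_equiv_nat_strictMono_comp {Y α : Type*} [Infinite Y] [LinearOrder α] {g : Y → α}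
    (hg : Function.Injective g) (hfin : ∀ a : α, {y : Y | g y ≤ a}.Finite) :
    ∃ e : ℕ ≃ Y, StrictMono (g ∘ e) := by
  let _ : LinearOrder Y := LinearOrder.lift' g hg
  obtain ⟨φ⟩ := nonempty_orderIso_nat_of_finite_Iic fun y : Y => hfin (g y)
  exact ⟨φ.symm.toEquiv, φ.symm.strictMono⟩

/-- An infinite type with a finite-fibered cost function can be
enumerated in nondecreasing order of cost. -/
theorem stmt_4 {Y : Type*} [Infinite Y] (c : Y → ℕ)
    (hc : ∀ n : ℕ, {y : Y | c y = n}.Finite) :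
    ∃ e : ℕ ≃ Y, ∀ i j : ℕ, i ≤ j → c (e i) ≤ c (e j) := by
  have := countable_of_finite_fibers c hc
  obtain ⟨f⟩ := nonempty_embedding_nat Y
  let g : Y → ℕ ×ₗ ℕ := fun y => toLex (c y, f y)
  have hg : Function.Injective g := fun a b hab =>
    f.injective (congrArg Prod.snd (congrArg ofLex hab))
  have hfin (p : ℕ ×ₗ ℕ) : {y : Y | g y ≤ p}.Finite := by
    refine ((Set.finite_Iic (ofLex p).1).preimage' fun n _ => hc n).subset fun y hy => ?_
    exact Prod.Lex.monotone_fst_ofLex hy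
  obtain ⟨e, he⟩ := exists_equiv_nat_strictMono_comp hg hfin
  exact ⟨e, fun i j hij => Prod.Lex.monotone_fst_ofLex (he.monotone hij)⟩
end

section
/- Let Y be an infinite type, c : Y → ℕ a function with finite fibers, and m : ℕ with 1 ≤ m. Then there exists a bijection g : Fin m × Y ≃ Y such that for every j : Fin m and y : Y, c y ≤ c (g (j, y)). (This is the 'unzipping' step: m indexed copies of Y can be bijectively remapped onto Y so that every image point has cost at least that of its source.) -/
/-!
Order `Y` lexicographically by cost and then by an injection into `ℕ`. Finite fibers make every
initial segment finite, so this order is isomorphic to `ℕ` via some `e`, and `e` strictly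
increases with the cost. The bijection `(j, y) ↦ e⁻¹ (e y * m + j)` never decreases `e`, hence
never decreases the cost.
-/

theorem nonempty_orderIso_nat_of_finite_Iio {α : Type*} [LinearOrder α] [Infinite α]
    (h : ∀ a : α, (Set.Iio a).Finite) : Nonempty (α ≃o ℕ) := by
  have hIic (a : α) : (Set.Iic a).Finite := by
    rw [← Set.Iio_insert]
    exact (h a).insert a
  let := LocallyFiniteOrder.ofFiniteIcc fun a b => (hIic b).subset Set.Icc_subset_Iic_self
  let := LinearLocallyFiniteOrder.succOrder α
  let := LinearLocallyFiniteOrder.predOrder α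
  have : NoMaxOrder α := ⟨fun a => by
    by_contra! hmax
    exact Set.infinite_univ.not_finite ((hIic a).subset fun x _ => hmax x)⟩
  obtain ⟨b, hba, hmin⟩ := (hIic (Classical.arbitrary α)).exists_minimal ⟨_, le_rfl⟩
  let : OrderBot α :=
    { bot := b
      bot_le := fun x => le_of_not_gt fun hxb => hxb.not_ge (hmin (hxb.le.trans hba) hxb.le) }
  exact ⟨orderIsoNatOfLinearSuccPredArch⟩

theorem exists_equiv_nat_lt_of_cost_lt {Y : Type*} [Infinite Y] (c : Y → ℕ)
    (hc : ∀ n : ℕ, {y : Y | c y = n}.Finite) :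
    ∃ e : Y ≃ ℕ, ∀ a b, c a < c b → e a < e b := by
  have : Countable Y := Set.Countable.of_preimage_singleton fun n => (hc n).countable
  obtain ⟨ι, hι⟩ := (countable_iff_exists_injective Y).mp this
  let : LinearOrder Y := LinearOrder.lift' (fun y => toLex (c y, ι y))
    fun a b hab => hι (Prod.ext_iff.1 (toLex.injective hab)).2
  have hlt_of_cost_lt {a b : Y} (h : c a < c b) : a < b := Prod.Lex.toLex_lt_toLex.2 (Or.inl h)
  have hIio_subset (a : Y) : Set.Iio a ⊆ c ⁻¹' Set.Iic (c a) := fun z hz =>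
    Prod.Lex.monotone_fst (toLex (c z, ι z)) (toLex (c a, ι a)) hz.le
  obtain ⟨e⟩ := nonempty_orderIso_nat_of_finite_Iio fun a =>
    ((Set.finite_Iic (c a)).preimage' fun n _ => hc n).subset (hIio_subset a)
  exact ⟨e.toEquiv, fun a b h => e.strictMono (hlt_of_cost_lt h)⟩

theorem exists_fin_prod_nat_equiv_le (m : ℕ) [NeZero m] :
    ∃ φ : Fin m × ℕ ≃ ℕ, ∀ j n, n ≤ φ (j, n) :=
  ⟨(Equiv.prodComm _ _).trans (Nat.divModEquiv m).symm, fun j n =>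
    show n ≤ n * m + j from (Nat.le_mul_of_pos_right n (NeZero.pos m)).trans (Nat.le_add_right _ _)⟩

/-- "unzipping": `m` indexed copies of an infinite type `Y` with
a finite-fibered cost function `c` can be bijectively remapped onto `Y` so that
every image point has cost at least that of its source. -/
theorem stmt_5 {Y : Type*} [Infinite Y] (c : Y → ℕ)
    (hc : ∀ n : ℕ, {y : Y | c y = n}.Finite) (m : ℕ) (hm : 1 ≤ m) :
    ∃ g : Fin m × Y ≃ Y, ∀ (j : Fin m) (y : Y), c y ≤ c (g (j, y)) := by
  have : NeZero m := NeZero.of_pos hm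
  obtain ⟨e, he⟩ := exists_equiv_nat_lt_of_cost_lt c hc
  obtain ⟨φ, hφ⟩ := exists_fin_prod_nat_equiv_le m
  refine ⟨((Equiv.refl _).prodCongr e).trans (φ.trans e.symm), fun j y => ?_⟩
  refine le_of_not_gt fun hlt => (he _ _ hlt).not_ge ?_
  simpa using hφ j (e y)
end

section
/- Let f : ℕ → ℝ be monotone (nondecreasing) and let L : Fin p → List U be a multicore input that is consistent with f. Let i₀ : Fin p and suppose L i₀ = u ++ x :: v for some lists u, v : List U and some page x : U. Define L' : Fin p → List U by L' i₀ = u ++ x :: x :: v and L' i = L i for every i ≠ i₀ (that is, L' repeats the request x immediately after its occurrence). Then L' is consistent with f. -/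
/-- A multicore input `L : Fin p → List U` is consistent with `f : ℕ → ℝ` if,
for every window size `w` and every choice of contiguous sublists (infixes)
`s i` of the `L i` of length at most `w`, the total number of distinct pages
occurring in the window is at most `f w`. -/
def MCConsistent {U : Type*} [DecidableEq U] {p : ℕ} (f : ℕ → ℝ)
    (L : Fin p → List U) : Prop :=
  ∀ (w : ℕ) (s : Fin p → List U),
    (∀ i, (s i) <:+: (L i)) → (∀ i, (s i).length ≤ w) →
    ((Finset.univ.biUnion fun i => (s i).toFinset).card : ℝ) ≤ f w

/-! A window of `L'` is never worse than some window of `L` as soon as each of its pieces can be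
replaced by an infix of the corresponding `L i` that is no longer and requests the same pages;
deleting one of two adjacent equal requests allows exactly this replacement. -/

section

variable {U : Type*} [DecidableEq U]

theorem List.exists_prefix_of_prefix_append_cons_cons (u v : List U) (x : U) {s : List U}
    (hs : s <+: u ++ x :: x :: v) :
    ∃ t, t <+: u ++ x :: v ∧ t.toFinset = s.toFinset ∧ t.length ≤ s.length := by
  induction u generalizing s with
  | nil =>
    rcases List.prefix_cons_iff.mp hs with rfl | ⟨t, rfl, ht⟩
    · exact ⟨[], List.nil_prefix, rfl, le_rfl⟩
    rcases List.prefix_cons_iff.mp ht with rfl | ⟨t', rfl, ht'⟩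
    · exact ⟨[x], by simp, rfl, le_rfl⟩
    · exact ⟨x :: t', by simpa using ht', by simp, by simp⟩
  | cons a u ih =>
    rcases List.prefix_cons_iff.mp hs with rfl | ⟨t, rfl, ht⟩
    · exact ⟨[], List.nil_prefix, rfl, le_rfl⟩
    obtain ⟨t', ht', hset, hlen⟩ := ih ht
    exact ⟨a :: t', by simpa using ht', by simp [hset], by simpa using hlen⟩

theorem List.exists_infix_of_infix_append_cons_cons (u v : List U) (x : U) {s : List U}
    (hs : s <:+: u ++ x :: x :: v) :
    ∃ t, t <:+: u ++ x :: v ∧ t.toFinset = s.toFinset ∧ t.length ≤ s.length := by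
  induction u with
  | nil =>
    rcases List.infix_cons_iff.mp hs with hpre | hinf
    · obtain ⟨t, ht, hset, hlen⟩ := List.exists_prefix_of_prefix_append_cons_cons [] v x hpre
      exact ⟨t, ht.isInfix, hset, hlen⟩
    · exact ⟨s, hinf, rfl, le_rfl⟩
  | cons a u ih =>
    rcases List.infix_cons_iff.mp hs with hpre | hinf
    · obtain ⟨t, ht, hset, hlen⟩ := List.exists_prefix_of_prefix_append_cons_cons (a :: u) v x hpre
      exact ⟨t, ht.isInfix, hset, hlen⟩
    · obtain ⟨t, ht, hset, hlen⟩ := ih hinf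
      exact ⟨t, List.infix_cons ht, hset, hlen⟩

theorem MCConsistent.of_forall_infix {p : ℕ} {f : ℕ → ℝ} {L L' : Fin p → List U}
    (hL : MCConsistent f L)
    (h : ∀ i s, s <:+: L' i →
      ∃ t, t <:+: L i ∧ t.toFinset = s.toFinset ∧ t.length ≤ s.length) :
    MCConsistent f L' := by
  intro w s hinf hlen
  choose t ht hset hlen' using fun i => h i (s i) (hinf i)
  simpa only [hset] using hL w t ht fun i => (hlen' i).trans (hlen i)

end

theorem stmt_8_general {U : Type*} [DecidableEq U] {p : ℕ} (f : ℕ → ℝ)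
    (L : Fin p → List U) (hL : MCConsistent f L)
    (i₀ : Fin p) (u v : List U) (x : U) (hsplit : L i₀ = u ++ x :: v)
    (L' : Fin p → List U) (hL'i₀ : L' i₀ = u ++ x :: x :: v)
    (hL' : ∀ i : Fin p, i ≠ i₀ → L' i = L i) :
    MCConsistent f L' := by
  refine hL.of_forall_infix fun i s hs => ?_
  by_cases hi : i = i₀
  · subst hi
    rw [hsplit]
    exact List.exists_infix_of_infix_append_cons_cons u v x (hL'i₀ ▸ hs)
  · exact ⟨s, hL' i hi ▸ hs, rfl, le_rfl⟩

/-- repeating a request immediately after its occurrence preserves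
consistency with a monotone concave-bound function `f`. -/
theorem stmt_8 {U : Type*} [DecidableEq U] {p : ℕ} (f : ℕ → ℝ)
    (hf : Monotone f) (L : Fin p → List U) (hL : MCConsistent f L)
    (i₀ : Fin p) (u v : List U) (x : U) (hsplit : L i₀ = u ++ x :: v)
    (L' : Fin p → List U) (hL'i₀ : L' i₀ = u ++ x :: x :: v)
    (hL' : ∀ i : Fin p, i ≠ i₀ → L' i = L i) :
    MCConsistent f L' :=
  stmt_8_general f L hL i₀ u v x hsplit L' hL'i₀ hL'
end

section
/- Let f : ℕ → ℝ, let β, δ : U be pages with β ≠ δ, and let P, S : List U. Assume: (i) the list P ++ S is consistent with f; (ii) β occurs in P, and writing P = P₁ ++ β :: P₂ with β ∉ P₂ (so this exhibits the last occurrence of β in P), the page δ does not occur in P₂ (δ does not appear in P after the last occurrence of β); and (iii) the list P ++ (S.map (Equiv.swap β δ)) is NOT consistent with f. Then β occurs in S, and writing S = S₁ ++ β :: S₂ with β ∉ S₁ (so this exhibits the first occurrence of β in S), the page δ does not occur in S₁ (no request to δ in S occurs earlier than the first request to β in S). -/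
/-- A list `l : List U` is consistent with `f : ℕ → ℝ` if every contiguous
sublist (infix) `s` of `l` contains at most `f s.length` distinct pages. -/
def ListConsistent {U : Type*} [DecidableEq U] (f : ℕ → ℝ) (l : List U) : Prop :=
  ∀ s : List U, s <:+: l → ((s.toFinset.card : ℝ)) ≤ f s.length

/-!
A window of `P ++ S.map (swap β δ)` lies in `P`, or is the swap of a window of `S`, or straddles
the boundary as `p ++ q.map (swap β δ)` with `p` a suffix of `P` and `q` a prefix of `S`. Only the
last kind can gain distinct pages, and it does not when every suffix of `P` containing `δ` contains
`β` and every prefix of `S` containing `β` contains `δ`: if `β ∉ p` the swap fixes `p`, so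
`p ∪ swap q = swap (p ∪ q)`; if `β ∈ p` the swap maps `q` into `p ∪ q`. The first condition holds
because `δ` does not follow the last `β` in `P`; if the conclusion failed, `δ` would precede the
first `β` in `S`, which gives the second.
-/

namespace List

variable {α : Type*} {l₁ l₂ : List α} {a : α}

theorem IsSuffix.suffix_or_cons_suffix {p : List α} (h : p <:+ l₁ ++ a :: l₂) :
    p <:+ l₂ ∨ a :: l₂ <:+ p := by
  rcases suffix_or_suffix_of_suffix h (suffix_append l₁ (a :: l₂)) with h' | h'
  · rcases suffix_cons_iff.1 h' with rfl | h''
    · exact .inr (suffix_refl _)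
    · exact .inl h''
  · exact .inr h'

theorem IsPrefix.prefix_or_concat_prefix {q : List α} (h : q <+: l₁ ++ a :: l₂) :
    q <+: l₁ ∨ l₁ ++ [a] <+: q := by
  have hconcat : l₁ ++ [a] <+: l₁ ++ a :: l₂ := by simp
  rcases prefix_or_prefix_of_prefix h hconcat with h' | h'
  · rcases prefix_concat_iff.1 h' with rfl | h''
    · exact .inr (prefix_refl _)
    · exact .inl h''
  · exact .inr h'

theorem toFinset_map {β : Type*} [DecidableEq α] [DecidableEq β] (g : α → β) (l : List α) :
    (l.map g).toFinset = l.toFinset.image g :=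
  Multiset.toFinset_map g l

end List

theorem Finset.card_union_image_swap_le {α : Type*} [DecidableEq α] {β δ : α} {A B : Finset α}
    (hA : δ ∈ A → β ∈ A) (hB : β ∈ B → δ ∈ B) :
    (A ∪ B.image (Equiv.swap β δ)).card ≤ (A ∪ B).card := by
  by_cases hβA : β ∈ A
  · refine card_le_card (union_subset subset_union_left fun x hx => ?_)
    obtain ⟨y, hy, rfl⟩ := mem_image.1 hx
    rcases eq_or_ne y β with rfl | hyβ
    · rw [Equiv.swap_apply_left]; exact mem_union_right A (hB hy)
    rcases eq_or_ne y δ with rfl | hyδ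
    · rw [Equiv.swap_apply_right]; exact mem_union_left B hβA
    · rw [Equiv.swap_apply_of_ne_of_ne hyβ hyδ]; exact mem_union_right A hy
  · have hfix : A.image (Equiv.swap β δ) = A := by
      refine (image_congr fun x hx => ?_).trans image_id
      exact Equiv.swap_apply_of_ne_of_ne (ne_of_mem_of_not_mem hx hβA)
        (ne_of_mem_of_not_mem hx (mt hA hβA))
    calc (A ∪ B.image (Equiv.swap β δ)).card = ((A ∪ B).image (Equiv.swap β δ)).card := by
          rw [image_union, hfix]
      _ ≤ (A ∪ B).card := (card_image_of_injective _ (Equiv.injective _)).le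

namespace ListConsistent

variable {U : Type*} [DecidableEq U] {f : ℕ → ℝ} {l l' : List U}

theorem of_infix (h : ListConsistent f l) (hl : l' <:+: l) : ListConsistent f l' :=
  fun s hs => h s (hs.trans hl)

theorem map_of_injective {V : Type*} [DecidableEq V] (h : ListConsistent f l) {g : U → V}
    (hg : g.Injective) :
    ListConsistent f (l.map g) := by
  intro s hs
  obtain ⟨s₀, hs₀, rfl⟩ := List.infix_map_iff.1 hs
  simpa [List.toFinset_map, Finset.card_image_of_injective _ hg] using h s₀ hs₀

theorem append_map_swap {β δ : U} {P S : List U} (h : ListConsistent f (P ++ S))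
    (hP : ∀ p, p <:+ P → δ ∈ p → β ∈ p) (hS : ∀ q, q <+: S → β ∈ q → δ ∈ q) :
    ListConsistent f (P ++ S.map (Equiv.swap β δ)) := by
  intro s hs
  rcases List.infix_append_iff.1 hs with hsP | hsS | ⟨p, q, rfl, hp, hq⟩
  · exact h.of_infix List.infix_append_left s hsP
  · exact (h.of_infix List.infix_append_right).map_of_injective (Equiv.injective _) s hsS
  · obtain ⟨q₀, hq₀, rfl⟩ := List.prefix_map_iff.1 hq
    have hwindow := h (p ++ q₀) (List.infix_append_iff.2 (.inr (.inr ⟨p, q₀, rfl, hp, hq₀⟩)))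
    have hcard := Finset.card_union_image_swap_le (A := p.toFinset) (B := q₀.toFinset)
      (by simpa using hP p hp) (by simpa using hS q₀ hq₀)
    simp only [List.length_append, List.length_map, List.toFinset_append,
      List.toFinset_map] at hwindow ⊢
    exact le_trans (by exact_mod_cast hcard) hwindow

end ListConsistent

theorem stmt_9_general {U : Type*} [DecidableEq U] (f : ℕ → ℝ) (β δ : U)
    (P S : List U) (P₁ P₂ : List U)
    (hP : P = P₁ ++ β :: P₂) (hδP₂ : δ ∉ P₂)
    (hcons : ListConsistent f (P ++ S))
    (hncons : ¬ ListConsistent f (P ++ S.map (Equiv.swap β δ))) :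
    β ∈ S ∧ ∀ S₁ S₂ : List U, S = S₁ ++ β :: S₂ → β ∉ S₁ → δ ∉ S₁ := by
  subst hP
  by_contra hcon
  refine hncons (hcons.append_map_swap (fun p hp hδp => ?_) (fun q hq hβq => ?_))
  · rcases hp.suffix_or_cons_suffix with hp₂ | hβp
    · exact absurd (hp₂.subset hδp) hδP₂
    · exact hβp.subset List.mem_cons_self
  · have hβS : β ∈ S := hq.subset hβq
    push Not at hcon
    obtain ⟨S₁, S₂, rfl, hβS₁, hδS₁⟩ := hcon hβS
    rcases hq.prefix_or_concat_prefix with hq₁ | hS₁q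
    · exact absurd (hq₁.subset hβq) hβS₁
    · exact hS₁q.subset (List.mem_append_left _ hδS₁)

/-- if `P ++ S` is consistent with `f`, `δ` does not appear in `P`
after the last occurrence of `β` in `P`, and the complement
`P ++ S.map (Equiv.swap β δ)` is not consistent with `f`, then `β` occurs in
`S` and no request to `δ` in `S` occurs earlier than the first request to `β`
in `S`. -/
theorem stmt_9 {U : Type*} [DecidableEq U] (f : ℕ → ℝ) (β δ : U) (hβδ : β ≠ δ)
    (P S : List U) (P₁ P₂ : List U)
    (hP : P = P₁ ++ β :: P₂) (hβP₂ : β ∉ P₂) (hδP₂ : δ ∉ P₂)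
    (hcons : ListConsistent f (P ++ S))
    (hncons : ¬ ListConsistent f (P ++ S.map (Equiv.swap β δ))) :
    β ∈ S ∧ ∀ S₁ S₂ : List U, S = S₁ ++ β :: S₂ → β ∉ S₁ → δ ∉ S₁ :=
  stmt_9_general f β δ P S P₁ P₂ hP hδP₂ hcons hncons
end
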